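/- Let $z \in \mathbb{R}^{d_1 \times d_2}$ with singular values $\sigma_1 \ge \sigma_2 \ge \cdots$, and let $z_S$ denote the truncation of $z$ to its top $k$ singular values ($k := \lfloor s \rfloor$ for some $s \ge 1$) and $z_S^\perp = z - z_S$ the remainder. Then the support function of $A = \mathbb{B}_{nuc}(\sqrt{s}) \cap \mathbb{B}_F(1)$ at $z$ satisfies $\phi_A(z) := \sup_{\Theta \in A} \langle \Theta, z \rangle \le \|z_S\|_F + \sqrt{s}\, \|z_S^\perp\|_{op} \le 3 \|z_S\|_F$. -/

import Mathlib

open scoped BigOperators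
open Matrix

/-- Frobenius norm of a real matrix. -/
noncomputable def frob {m n : ℕ} (A : Matrix (Fin m) (Fin n) ℝ) : ℝ :=
  Real.sqrt (∑ i, ∑ j, (A i j) ^ 2)

/-- Trace inner product `⟨A, B⟩ = trace (Aᵀ B)`. -/
noncomputable def minner {m n : ℕ} (A B : Matrix (Fin m) (Fin n) ℝ) : ℝ :=
  Matrix.trace (Aᵀ * B)

/-- Nuclear norm: sum of the singular values of `A`. -/
noncomputable def nucNorm {m n : ℕ} (A : Matrix (Fin m) (Fin n) ℝ) : ℝ :=
  ∑ i, Real.sqrt ((Matrix.isHermitian_conjTranspose_mul_self A).eigenvalues i)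

/-- Operator (spectral) norm: `sup {‖A v‖₂ : ‖v‖₂ ≤ 1}`. -/
noncomputable def opNorm {m n : ℕ} (A : Matrix (Fin m) (Fin n) ℝ) : ℝ :=
  sSup {c | ∃ v : Fin n → ℝ, (∑ j, (v j) ^ 2) ≤ 1 ∧
    c = Real.sqrt (∑ i, (A.mulVec v i) ^ 2)}

/-!
Split `z = z_S + z_S^⊥`. Against `z_S` use Cauchy–Schwarz, `⟨Θ, z_S⟩ ≤ ‖Θ‖_F ‖z_S‖_F`; against
`z_S^⊥` use the Hölder duality `⟨Θ, M⟩ ≤ ‖Θ‖_nuc ‖M‖_op`, proved by expanding the trace in an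
eigenbasis of `ΘᵀΘ`. For the second inequality, every singular value of `z_S^⊥` is some `σ_i` with
`i ≥ k`, and monotonicity gives `k σ_i² ≤ ‖z_S‖_F²`; since `s < k + 1 ≤ 2k` this yields
`√s ‖z_S^⊥‖_op ≤ 2 ‖z_S‖_F`.
-/

section RealMatrix

variable {m n r : Type*} [Fintype m] [Fintype n] [Fintype r]

lemma sum_sq_eq_dotProduct_self (v : n → ℝ) : ∑ i, v i ^ 2 = v ⬝ᵥ v := by
  simp only [dotProduct, sq]

lemma sum_sum_sq_eq_trace (A : Matrix m n ℝ) :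
    ∑ i, ∑ j, A i j ^ 2 = trace (Aᵀ * A) := by
  simp only [trace, diag, mul_apply, transpose_apply, sq]
  exact Finset.sum_comm

lemma mulVec_dotProduct_mulVec (A B : Matrix m n ℝ) (x y : n → ℝ) :
    (A *ᵥ x) ⬝ᵥ (B *ᵥ y) = x ⬝ᵥ ((Aᵀ * B) *ᵥ y) := by
  rw [← mulVec_mulVec, dotProduct_mulVec x, vecMul_transpose]

lemma dotProduct_mulVec_mulVec_of_transpose_mul_self_eq_one [DecidableEq r] {U : Matrix m r ℝ}
    (hU : Uᵀ * U = 1) (x y : r → ℝ) : (U *ᵥ x) ⬝ᵥ (U *ᵥ y) = x ⬝ᵥ y := by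
  rw [mulVec_dotProduct_mulVec, hU, one_mulVec]

lemma transpose_mulVec_dotProduct_self_le [DecidableEq r] {V : Matrix m r ℝ}
    (hV : Vᵀ * V = 1) (v : m → ℝ) : (Vᵀ *ᵥ v) ⬝ᵥ (Vᵀ *ᵥ v) ≤ v ⬝ᵥ v := by
  set w := Vᵀ *ᵥ v
  have hvw : v ⬝ᵥ (V *ᵥ w) = w ⬝ᵥ w := by
    rw [dotProduct_mulVec, ← mulVec_transpose]
  have hww : (V *ᵥ w) ⬝ᵥ (V *ᵥ w) = w ⬝ᵥ w :=
    dotProduct_mulVec_mulVec_of_transpose_mul_self_eq_one hV w w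
  -- Bessel: `‖v‖² - ‖Vᵀ v‖² = ‖v - V Vᵀ v‖²`
  have hres : 0 ≤ (v - V *ᵥ w) ⬝ᵥ (v - V *ᵥ w) :=
    Finset.sum_nonneg fun i _ => mul_self_nonneg _
  simp only [sub_dotProduct, dotProduct_sub, dotProduct_comm (V *ᵥ w) v, hvw, hww] at hres
  linarith

lemma trace_transpose_mul_eq_sum_dotProduct [DecidableEq n] (A B : Matrix m n ℝ)
    {Q : Matrix n n ℝ} (hQ : Qᵀ * Q = 1) :
    trace (Aᵀ * B) = ∑ j, (A *ᵥ Q j) ⬝ᵥ (B *ᵥ Q j) := by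
  calc trace (Aᵀ * B) = trace (Q * (Aᵀ * B) * Qᵀ) := by
        rw [trace_mul_cycle, hQ, Matrix.one_mul]
    _ = ∑ j, (A *ᵥ Q j) ⬝ᵥ (B *ᵥ Q j) := by
        refine Finset.sum_congr rfl fun j _ => ?_
        rw [mulVec_dotProduct_mulVec, dotProduct_mulVec]
        rfl

lemma trace_transpose_mul_svd [DecidableEq r] {U : Matrix m r ℝ} {V : Matrix n r ℝ}
    (hU : Uᵀ * U = 1) (hV : Vᵀ * V = 1) (d : r → ℝ) :
    trace ((U * diagonal d * Vᵀ)ᵀ * (U * diagonal d * Vᵀ)) = ∑ i, d i ^ 2 := by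
  have hsq : (U * diagonal d * Vᵀ)ᵀ * (U * diagonal d * Vᵀ) = V * diagonal (d ^ 2) * Vᵀ := by
    simp only [transpose_mul, transpose_transpose, diagonal_transpose, Matrix.mul_assoc]
    rw [← Matrix.mul_assoc Uᵀ, hU, Matrix.one_mul, ← Matrix.mul_assoc (diagonal d),
      diagonal_mul_diagonal, sq]
    rfl
  rw [hsq, trace_mul_cycle, hV, Matrix.one_mul, trace_diagonal]
  rfl

lemma sum_sq_svd_mulVec [DecidableEq r] {U : Matrix m r ℝ} (V : Matrix n r ℝ)
    (hU : Uᵀ * U = 1) (d : r → ℝ) (v : n → ℝ) :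
    ∑ i, ((U * diagonal d * Vᵀ) *ᵥ v) i ^ 2 = ∑ i, d i ^ 2 * (Vᵀ *ᵥ v) i ^ 2 := by
  have h := dotProduct_mulVec_mulVec_of_transpose_mul_self_eq_one hU
    (diagonal d *ᵥ (Vᵀ *ᵥ v)) (diagonal d *ᵥ (Vᵀ *ᵥ v))
  rw [mulVec_mulVec, mulVec_mulVec] at h
  simp only [dotProduct, mulVec_diagonal] at h
  simp only [sq, h]
  exact Finset.sum_congr rfl fun i _ => by ring

lemma sum_sq_mulVec_of_mulVec_eq_smul {Θ : Matrix m n ℝ} {x : n → ℝ} {μ : ℝ}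
    (hx : (Θᵀ * Θ) *ᵥ x = μ • x) (hunit : x ⬝ᵥ x = 1) : ∑ i, (Θ *ᵥ x) i ^ 2 = μ := by
  rw [sum_sq_eq_dotProduct_self, mulVec_dotProduct_mulVec, hx, dotProduct_smul, hunit,
    smul_eq_mul, mul_one]

end RealMatrix

section Norms

variable {m n : ℕ}

lemma minner_add_right (A B C : Matrix (Fin m) (Fin n) ℝ) :
    minner A (B + C) = minner A B + minner A C := by
  rw [minner, minner, minner, Matrix.mul_add, trace_add]

lemma minner_le_frob_mul_frob (A B : Matrix (Fin m) (Fin n) ℝ) :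
    minner A B ≤ frob A * frob B := by
  have hflat : ∀ f : Fin m → Fin n → ℝ, ∑ i, ∑ j, f i j = ∑ p : Fin m × Fin n, f p.1 p.2 :=
    fun f => (Fintype.sum_prod_type (fun p => f p.1 p.2)).symm
  have hAB : minner A B = ∑ i, ∑ j, A i j * B i j := by
    simp only [minner, trace, diag, mul_apply, transpose_apply]
    exact Finset.sum_comm
  rw [hAB, frob, frob, hflat, hflat, hflat]
  exact Real.sum_mul_le_sqrt_mul_sqrt _ _ _

lemma sqrt_sum_sq_mulVec_le_frob (M : Matrix (Fin m) (Fin n) ℝ) {v : Fin n → ℝ}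
    (hv : ∑ j, v j ^ 2 ≤ 1) : √(∑ i, (M *ᵥ v) i ^ 2) ≤ frob M := by
  refine Real.sqrt_le_sqrt (Finset.sum_le_sum fun i _ => ?_)
  calc (M *ᵥ v) i ^ 2 ≤ (∑ j, M i j ^ 2) * ∑ j, v j ^ 2 :=
        Finset.sum_mul_sq_le_sq_mul_sq Finset.univ (M i) v
    _ ≤ ∑ j, M i j ^ 2 := mul_le_of_le_one_right (by positivity) hv

lemma le_opNorm (M : Matrix (Fin m) (Fin n) ℝ) {v : Fin n → ℝ} (hv : ∑ j, v j ^ 2 ≤ 1) :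
    √(∑ i, (M *ᵥ v) i ^ 2) ≤ opNorm M :=
  le_csSup ⟨frob M, by rintro c ⟨w, hw, rfl⟩; exact sqrt_sum_sq_mulVec_le_frob M hw⟩ ⟨v, hv, rfl⟩

lemma opNorm_nonneg (M : Matrix (Fin m) (Fin n) ℝ) : 0 ≤ opNorm M :=
  (Real.sqrt_nonneg _).trans (le_opNorm M (v := 0) (by simp))

lemma opNorm_le {M : Matrix (Fin m) (Fin n) ℝ} {c : ℝ}
    (h : ∀ v : Fin n → ℝ, ∑ j, v j ^ 2 ≤ 1 → √(∑ i, (M *ᵥ v) i ^ 2) ≤ c) :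
    opNorm M ≤ c :=
  csSup_le ⟨_, 0, by simp, rfl⟩ fun _ ⟨v, hv, hc⟩ => hc ▸ h v hv

lemma minner_le_nucNorm_mul (Θ M : Matrix (Fin m) (Fin n) ℝ) {c : ℝ}
    (hM : ∀ v : Fin n → ℝ, ∑ j, v j ^ 2 ≤ 1 → √(∑ i, (M *ᵥ v) i ^ 2) ≤ c) :
    minner Θ M ≤ nucNorm Θ * c := by
  set hH := isHermitian_conjTranspose_mul_self Θ
  set W : Matrix (Fin n) (Fin n) ℝ := (hH.eigenvectorUnitary : Matrix (Fin n) (Fin n) ℝ)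
  have hWWt : W * Wᵀ = 1 := by
    rw [← conjTranspose_eq_transpose_of_trivial W, ← star_eq_conjTranspose]
    exact Unitary.mul_star_self_of_mem hH.eigenvectorUnitary.2
  have hWtW : Wᵀ * W = 1 := mul_eq_one_comm.mp hWWt
  have hrow : ∀ j, Wᵀ j = hH.eigenvectorBasis j := hH.eigenvectorUnitary_transpose_apply
  have hunit : ∀ j, Wᵀ j ⬝ᵥ Wᵀ j = 1 := fun j => by
    simpa [mul_apply, one_apply, dotProduct] using congrFun (congrFun hWtW j) j
  have heig : ∀ j, (Θᵀ * Θ) *ᵥ Wᵀ j = hH.eigenvalues j • Wᵀ j := fun j => by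
    simpa only [hrow, conjTranspose_eq_transpose_of_trivial] using hH.mulVec_eigenvectorBasis j
  rw [minner, trace_transpose_mul_eq_sum_dotProduct Θ M (Q := Wᵀ) (by rwa [transpose_transpose]),
    nucNorm, Finset.sum_mul]
  refine Finset.sum_le_sum fun j _ => ?_
  calc (Θ *ᵥ Wᵀ j) ⬝ᵥ (M *ᵥ Wᵀ j)
      ≤ √(∑ i, (Θ *ᵥ Wᵀ j) i ^ 2) * √(∑ i, (M *ᵥ Wᵀ j) i ^ 2) :=
        Real.sum_mul_le_sqrt_mul_sqrt _ _ _
    _ ≤ √(hH.eigenvalues j) * c := by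
        rw [sum_sq_mulVec_of_mulVec_eq_smul (heig j) (hunit j)]
        gcongr
        exact hM _ ((sum_sq_eq_dotProduct_self _).trans (hunit j)).le

end Norms

section SVD

variable {m n r : ℕ} {U : Matrix (Fin m) (Fin r) ℝ} {V : Matrix (Fin n) (Fin r) ℝ}

lemma frob_svd (hU : Uᵀ * U = 1) (hV : Vᵀ * V = 1) (d : Fin r → ℝ) :
    frob (U * diagonal d * Vᵀ) = √(∑ i, d i ^ 2) := by
  rw [frob, sum_sum_sq_eq_trace, trace_transpose_mul_svd hU hV]

lemma opNorm_svd_le (hU : Uᵀ * U = 1) (hV : Vᵀ * V = 1) {d : Fin r → ℝ} {c : ℝ}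
    (hc : 0 ≤ c) (hd : ∀ i, |d i| ≤ c) : opNorm (U * diagonal d * Vᵀ) ≤ c := by
  refine opNorm_le fun v hv => ?_
  have hw : ∑ i, (Vᵀ *ᵥ v) i ^ 2 ≤ 1 := by
    rw [sum_sq_eq_dotProduct_self] at hv ⊢
    exact (transpose_mulVec_dotProduct_self_le hV v).trans hv
  rw [sum_sq_svd_mulVec V hU, Real.sqrt_le_left hc]
  calc ∑ i, d i ^ 2 * (Vᵀ *ᵥ v) i ^ 2 ≤ ∑ i, c ^ 2 * (Vᵀ *ᵥ v) i ^ 2 := by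
        gcongr ∑ i, ?_ * _ with i
        exact sq_le_sq' (abs_le.mp (hd i)).1 (abs_le.mp (hd i)).2
    _ = c ^ 2 * ∑ i, (Vᵀ *ᵥ v) i ^ 2 := (Finset.mul_sum _ _ _).symm
    _ ≤ c ^ 2 := mul_le_of_le_one_right (sq_nonneg c) hw

end SVD

section Truncation

variable {r : ℕ} {σ : Fin r → ℝ}

lemma natCast_mul_sq_le_sum_sq_truncate (hσnn : ∀ i, 0 ≤ σ i) (hσdec : Antitone σ) {k : ℕ}
    {i : Fin r} (hki : k ≤ i) :
    k * σ i ^ 2 ≤ ∑ j : Fin r, (if (j : ℕ) < k then σ j else 0) ^ 2 := by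
  have hcard : (Finset.univ.filter fun j : Fin r => (j : ℕ) < k).card = k := by
    rw [Fin.card_filter_val_lt]; omega
  calc (k : ℝ) * σ i ^ 2 = ∑ j : Fin r, if (j : ℕ) < k then σ i ^ 2 else 0 := by
        rw [← Finset.sum_filter, Finset.sum_const, hcard, nsmul_eq_mul]
    _ ≤ ∑ j : Fin r, (if (j : ℕ) < k then σ j else 0) ^ 2 := by
        gcongr with j
        split_ifs with hj
        · exact pow_le_pow_left₀ (hσnn i) (hσdec (Fin.le_def.mpr (by omega))) 2
        · simp

lemma sqrt_mul_le_two_mul_sqrt_sum_sq_truncate (hσnn : ∀ i, 0 ≤ σ i) (hσdec : Antitone σ)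
    {s : ℝ} (hs : 1 ≤ s) {i : Fin r} (hi : ⌊s⌋₊ ≤ i) :
    √s * σ i ≤ 2 * √(∑ j : Fin r, (if (j : ℕ) < ⌊s⌋₊ then σ j else 0) ^ 2) := by
  have hk : (1 : ℝ) ≤ ⌊s⌋₊ := by exact_mod_cast (Nat.one_le_floor_iff s).mpr hs
  have hsk : s < ⌊s⌋₊ + 1 := Nat.lt_floor_add_one s
  have hcount := natCast_mul_sq_le_sum_sq_truncate hσnn hσdec hi
  calc √s * σ i = √(s * σ i ^ 2) := by rw [Real.sqrt_mul (by linarith), Real.sqrt_sq (hσnn i)]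
    _ ≤ √(2 ^ 2 * ∑ j : Fin r, (if (j : ℕ) < ⌊s⌋₊ then σ j else 0) ^ 2) :=
        Real.sqrt_le_sqrt (by nlinarith [sq_nonneg (σ i)])
    _ = 2 * √(∑ j : Fin r, (if (j : ℕ) < ⌊s⌋₊ then σ j else 0) ^ 2) := by
        rw [Real.sqrt_mul (by norm_num), Real.sqrt_sq zero_le_two]

end Truncation

/-- Support-function bound: for `z` with SVD `z = U diag(σ) Vᵀ` (singular values
in decreasing order) and `z_S` the truncation to the top `k = ⌊s⌋` singular
values, `φ_A(z) = sup_{Θ ∈ 𝔹_nuc(√s) ∩ 𝔹_F(1)} ⟨Θ, z⟩` satisfies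
`φ_A(z) ≤ ‖z_S‖_F + √s ‖z_S^⊥‖_op ≤ 3 ‖z_S‖_F`. -/
theorem support_function_truncation_bound (d₁ d₂ : ℕ) (s : ℝ) (hs : 1 ≤ s)
    (U : Matrix (Fin d₁) (Fin (min d₁ d₂)) ℝ)
    (V : Matrix (Fin d₂) (Fin (min d₁ d₂)) ℝ)
    (σ : Fin (min d₁ d₂) → ℝ)
    (hU : Uᵀ * U = 1) (hV : Vᵀ * V = 1)
    (hσnn : ∀ i, 0 ≤ σ i) (hσdec : Antitone σ)
    (z zS zperp : Matrix (Fin d₁) (Fin d₂) ℝ)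
    (hz : z = U * Matrix.diagonal σ * Vᵀ)
    (hzS : zS = U * Matrix.diagonal
      (fun i : Fin (min d₁ d₂) => if (i : ℕ) < ⌊s⌋₊ then σ i else 0) * Vᵀ)
    (hzperp : zperp = z - zS) :
    (∀ Θ : Matrix (Fin d₁) (Fin d₂) ℝ,
        nucNorm Θ ≤ Real.sqrt s → frob Θ ≤ 1 →
        minner Θ z ≤ frob zS + Real.sqrt s * opNorm zperp) ∧
      frob zS + Real.sqrt s * opNorm zperp ≤ 3 * frob zS := by
  have hzperp_svd : zperp = U * diagonal
      (fun i : Fin (min d₁ d₂) => if (i : ℕ) < ⌊s⌋₊ then 0 else σ i) * Vᵀ := by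
    rw [hzperp, hz, hzS, ← Matrix.sub_mul, ← Matrix.mul_sub, diagonal_sub]
    congr 3
    funext i
    split_ifs <;> ring
  have hfrob_nonneg : 0 ≤ frob zS := Real.sqrt_nonneg _
  have hsqrt_pos : 0 < √s := Real.sqrt_pos.mpr (by linarith)
  have hop : √s * opNorm zperp ≤ 2 * frob zS := by
    rw [← le_div_iff₀' hsqrt_pos, hzperp_svd]
    refine opNorm_svd_le hU hV (by positivity) fun i => ?_
    split_ifs with hi
    · rw [abs_zero]; positivity
    · rw [abs_of_nonneg (hσnn i), le_div_iff₀' hsqrt_pos, hzS, frob_svd hU hV]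
      exact sqrt_mul_le_two_mul_sqrt_sum_sq_truncate hσnn hσdec hs (not_lt.mp hi)
  refine ⟨fun Θ hnuc hfrob => ?_, by linarith⟩
  calc minner Θ z = minner Θ zS + minner Θ zperp := by
        rw [← minner_add_right, hzperp, add_sub_cancel]
    _ ≤ frob Θ * frob zS + nucNorm Θ * opNorm zperp :=
        add_le_add (minner_le_frob_mul_frob Θ zS)
          (minner_le_nucNorm_mul Θ zperp fun _ hv => le_opNorm zperp hv)
    _ ≤ frob zS + √s * opNorm zperp :=
        add_le_add (mul_le_of_le_one_left hfrob_nonneg hfrob)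
          (mul_le_mul_of_nonneg_right hnuc (opNorm_nonneg zperp))
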